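/- arXiv:1304.6707 — 2 statements merged into one kernel-verified Lean document; each statement's English description precedes it below -/
import Mathlib

section
/- Let ε > 0 and set q = (1+ε)^{1/(n+1)}. Let L be a real number, let k be an integer with k ≥ n such that τ′(v_n, q^k) ≤ L < τ′(v_n, q^{k+1}), and let a be a nonnegative integer such that τ(v_n, a) ≤ L < τ(v_n, a+1). Then (1+ε)^{−1} ≤ a/q^k ≤ 1+ε. -/
open scoped BigOperators

/-- `IsWalk src dst u v p` : the list of edges `p` forms a directed walk from `u` to `v`
in the multigraph whose edges `e` go from `src e` to `dst e`. -/
def IsWalk {V E : Type} (src dst : E → V) : V → V → List E → Prop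
  | u, v, [] => u = v
  | u, v, e :: p => src e = u ∧ IsWalk src dst (dst e) v p

/-- `tau src dst w s v a` : the smallest threshold `L ∈ ℝ` (as an element of
`ℝ ∪ {−∞, +∞}`) such that at least `a` directed `s`–`v` paths have weight at most `L`;
it is `−∞` when `a ≤ 0` and `+∞` when `a` exceeds the total number of `s`–`v` paths. -/
noncomputable def tau {V E : Type} (src dst : E → V) (w : E → ℝ) (s v : V) (a : ℝ) : EReal :=
  sInf {x : EReal | ∃ L : ℝ, x = (L : EReal) ∧
    a ≤ (Nat.card {p : List E // IsWalk src dst s v p ∧ (p.map w).sum ≤ L} : ℝ)}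


/-!
Write `N(v, L)` for the number of paths from the source to `v` of weight at most `L`. Since
`N(v, ·)` is a right-continuous step function, `τ(v, a) ≤ L ↔ a ≤ N(v, L)`, and away from the
source `N(v, L) = ∑_{e : u → v} N(u, L - w e)`. Induction along the topological order then gives
`τ′(v, q^j) ≤ τ(v, q^j)`, by taking `α_e` proportional to `N(u, L - w e)`, and
`τ(v_i, q^(j-i)) ≤ τ′(v_i, q^j)`, since each rounding down of an exponent loses a factor less
than `q` and the index grows along every edge. For `v = v_n` this squeezes `a = N(v_n, L)`
between `q^(k-n+1)` and `q^(k+1)`, and `q^(n+1) = 1 + ε`.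
-/

open Filter Topology

theorem Set.Finite.exists_gt_forall_le_imp_le {α : Type*} {s : Set α} (hs : s.Finite)
    (f : α → ℝ) (L : ℝ) : ∃ L' > L, ∀ x ∈ s, f x ≤ L' → f x ≤ L := by
  have h : ∀ᶠ L' in 𝓝[>] L, ∀ x ∈ s, f x ≤ L' → f x ≤ L := by
    refine hs.eventually_all.2 fun x _ => ?_
    rcases le_or_gt (f x) L with hx | hx
    · exact Eventually.of_forall fun _ _ => hx
    · filter_upwards [Ioo_mem_nhdsGT hx] with L' hL' hle
      exact absurd hle (not_le.2 hL'.2)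
  obtain ⟨L', hL', hgt⟩ := (h.and self_mem_nhdsWithin).exists
  exact ⟨L', hgt, hL'⟩

theorem EReal.sInf_le_coe_iff_of_monotone {N : ℝ → ℝ} (hmono : Monotone N)
    (hright : ∀ L, ∃ L' > L, N L' ≤ N L) (a L : ℝ) :
    sInf {x : EReal | ∃ M : ℝ, x = M ∧ a ≤ N M} ≤ L ↔ a ≤ N L := by
  refine ⟨fun h => ?_, fun h => sInf_le ⟨L, rfl, h⟩⟩
  by_contra! hlt
  obtain ⟨L', hLL', hN⟩ := hright L
  have hle : (L' : EReal) ≤ sInf {x : EReal | ∃ M : ℝ, x = M ∧ a ≤ N M} := by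
    refine le_sInf ?_
    rintro _ ⟨M, rfl, hM⟩
    by_contra! hML
    exact (hM.trans ((hmono (EReal.coe_lt_coe_iff.1 hML).le).trans hN)).not_gt hlt
  exact (EReal.coe_le_coe_iff.1 (hle.trans h)).not_gt hLL'

theorem EReal.add_coe_le_coe_iff {x : EReal} {c M : ℝ} :
    x + c ≤ M ↔ x ≤ ((M - c : ℝ) : EReal) := by
  rw [EReal.coe_sub, EReal.le_sub_iff_add_le (.inl (EReal.coe_ne_bot c))
    (.inl (EReal.coe_ne_top c))]

section Walks

variable {V E : Type} (src dst : E → V)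

theorem isWalk_append_singleton (p : List E) (u v : V) (e : E) :
    IsWalk src dst u v (p ++ [e]) ↔ IsWalk src dst u (src e) p ∧ dst e = v := by
  induction p generalizing u with
  | nil => simp only [List.nil_append, IsWalk, eq_comm]
  | cons f p ih => simp only [List.cons_append, IsWalk, ih, and_assoc]

noncomputable def walkCount (w : E → ℝ) (u v : V) (L : ℝ) : ℕ :=
  Nat.card {p : List E // IsWalk src dst u v p ∧ (p.map w).sum ≤ L}

theorem tau_eq_sInf_walkCount (w : E → ℝ) (u v : V) (a : ℝ) :
    tau src dst w u v a =
      sInf {x : EReal | ∃ L : ℝ, x = L ∧ a ≤ (walkCount src dst w u v L : ℝ)} := rfl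

end Walks

section Acyclic

variable {n : ℕ} {E : Type} {src dst : E → Fin n}

theorem IsWalk.val_add_length_le (htopo : ∀ e, src e < dst e) {u v : Fin n} {p : List E}
    (h : IsWalk src dst u v p) : (u : ℕ) + p.length ≤ v := by
  induction p generalizing u with
  | nil =>
    obtain rfl : u = v := h
    simp
  | cons e p ih =>
    obtain ⟨rfl, h⟩ := h
    have := ih h
    have := htopo e
    simp only [List.length_cons]
    omega

theorem isWalk_self_iff (htopo : ∀ e, src e < dst e) {u : Fin n} {p : List E} :
    IsWalk src dst u u p ↔ p = [] := by
  refine ⟨fun h => List.eq_nil_of_length_eq_zero ?_, fun h => h ▸ rfl⟩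
  have := h.val_add_length_le htopo
  omega

theorem finite_setOf_isWalk [Finite E] (htopo : ∀ e, src e < dst e) (u v : Fin n) :
    {p : List E | IsWalk src dst u v p}.Finite := by
  refine (List.finite_length_le E n).subset fun p (hp : IsWalk src dst u v p) => ?_
  have := hp.val_add_length_le htopo
  have := v.isLt
  show p.length ≤ n
  omega

variable (w : E → ℝ)

theorem finite_walkCount_subtype [Finite E] (htopo : ∀ e, src e < dst e) (u v : Fin n)
    (L : ℝ) : Finite {p : List E // IsWalk src dst u v p ∧ (p.map w).sum ≤ L} :=
  ((finite_setOf_isWalk htopo u v).subset fun _ hp => hp.1).to_subtype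

theorem monotone_walkCount [Finite E] (htopo : ∀ e, src e < dst e) (u v : Fin n) :
    Monotone (walkCount src dst w u v) := fun _ _ hL =>
  Nat.card_mono ((finite_setOf_isWalk htopo u v).subset fun _ hp => hp.1)
    fun _ hp => ⟨hp.1, hp.2.trans hL⟩

theorem exists_gt_walkCount_le [Finite E] (htopo : ∀ e, src e < dst e) (u v : Fin n) (L : ℝ) :
    ∃ L' > L, walkCount src dst w u v L' ≤ walkCount src dst w u v L := by
  obtain ⟨L', hLL', hL'⟩ :=
    (finite_setOf_isWalk htopo u v).exists_gt_forall_le_imp_le (fun p => (p.map w).sum) L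
  refine ⟨L', hLL', Nat.card_mono ((finite_setOf_isWalk htopo u v).subset fun _ hp => hp.1) ?_⟩
  exact fun p hp => ⟨hp.1, hL' p hp.1 hp.2⟩

theorem tau_le_coe_iff [Finite E] (htopo : ∀ e, src e < dst e) (u v : Fin n) (a L : ℝ) :
    tau src dst w u v a ≤ L ↔ a ≤ (walkCount src dst w u v L : ℝ) :=
  EReal.sInf_le_coe_iff_of_monotone (Nat.mono_cast.comp (monotone_walkCount w htopo u v))
    (fun L => (exists_gt_walkCount_le w htopo u v L).imp fun _ h => ⟨h.1, Nat.cast_le.2 h.2⟩)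
    a L

theorem walkCount_self [Finite E] (htopo : ∀ e, src e < dst e) (u : Fin n) (L : ℝ) :
    walkCount src dst w u u L = if 0 ≤ L then 1 else 0 := by
  split_ifs with hL
  · refine Nat.card_eq_one_iff_exists.2 ⟨⟨[], rfl, by simpa using hL⟩, ?_⟩
    exact fun ⟨p, hp, _⟩ => Subtype.ext ((isWalk_self_iff htopo).1 hp)
  · refine Nat.card_eq_zero.2 (.inl ⟨fun ⟨p, hp, hpL⟩ => hL ?_⟩)
    obtain rfl := (isWalk_self_iff htopo).1 hp
    simpa using hpL

theorem walkCount_eq_sum [Fintype E] (htopo : ∀ e, src e < dst e) {u v : Fin n} (hv : v ≠ u)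
    (L : ℝ) :
    walkCount src dst w u v L = ∑ e ∈ Finset.univ.filter (fun e => dst e = v),
      walkCount src dst w u (src e) (L - w e) := by
  classical
  have := fun e : {e : E // dst e = v} => finite_walkCount_subtype w htopo u (src e.1) (L - w e)
  let extend : (Σ e : {e : E // dst e = v},
      {p : List E // IsWalk src dst u (src e.1) p ∧ (p.map w).sum ≤ L - w e.1}) →
      {p : List E // IsWalk src dst u v p ∧ (p.map w).sum ≤ L} := fun x =>
    ⟨x.2.1 ++ [x.1.1], (isWalk_append_singleton src dst _ u v _).2 ⟨x.2.2.1, x.1.2⟩,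
      by simp; linarith [x.2.2.2]⟩
  have hextend : Function.Bijective extend := by
    constructor
    · rintro ⟨⟨e, he⟩, p, hp⟩ ⟨⟨e', he'⟩, p', hp'⟩ h
      obtain ⟨rfl, hee'⟩ := List.append_inj' (congrArg Subtype.val h) rfl
      obtain rfl : e = e' := List.singleton_inj.1 hee'
      rfl
    · rintro ⟨p, hp, hpL⟩
      obtain rfl | ⟨p, e, rfl⟩ := p.eq_nil_or_concat'
      · exact absurd (hp : u = v).symm hv
      obtain ⟨hp, he⟩ := (isWalk_append_singleton src dst p u v e).1 hp
      exact ⟨⟨⟨e, he⟩, p, hp, by simp at hpL; linarith⟩, rfl⟩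
  rw [walkCount, ← Nat.card_eq_of_bijective extend hextend, Nat.card_sigma]
  exact (Finset.sum_subtype _ (fun e => by simp)
    fun e => walkCount src dst w u (src e) (L - w e)).symm

theorem tau_self_of_le_one [Finite E] (htopo : ∀ e, src e < dst e) (u : Fin n) {a : ℝ}
    (ha0 : 0 < a) (ha1 : a ≤ 1) : tau src dst w u u a = 0 := by
  have key : ∀ M : ℝ, tau src dst w u u a ≤ M ↔ 0 ≤ M := fun M => by
    rw [tau_le_coe_iff w htopo, walkCount_self w htopo]
    split_ifs with hM <;> simp [hM, ha1, ha0.not_ge]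
  refine le_antisymm (by exact_mod_cast (key 0).2 le_rfl) (le_sInf ?_)
  rintro _ ⟨M, rfl, hM⟩
  exact_mod_cast (key M).1 ((tau_le_coe_iff w htopo u u a M).2 hM)

theorem tau_self_of_one_lt [Finite E] (htopo : ∀ e, src e < dst e) (u : Fin n) {a : ℝ}
    (ha : 1 < a) : tau src dst w u u a = ⊤ := by
  refine sInf_eq_top.2 ?_
  rintro _ ⟨M, rfl, hM⟩
  have : (walkCount src dst w u u M : ℝ) ≤ 1 := by
    rw [walkCount_self w htopo]
    split_ifs <;> norm_num
  exact absurd (hM.trans this) ha.not_ge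

theorem walkCount_eq_of_tau [Finite E] (htopo : ∀ e, src e < dst e) {u v : Fin n} {a : ℕ}
    {L : ℝ} (ha : tau src dst w u v a ≤ L) (ha' : (L : EReal) < tau src dst w u v (a + 1)) :
    walkCount src dst w u v L = a := by
  rw [tau_le_coe_iff w htopo] at ha
  rw [← not_le, tau_le_coe_iff w htopo] at ha'
  have hlt : walkCount src dst w u v L < a + 1 := by exact_mod_cast not_le.1 ha'
  exact le_antisymm (Nat.lt_succ_iff.1 hlt) (by exact_mod_cast ha)

end Acyclic

section Rounding

variable {q α : ℝ}

theorem rpow_intCast_add_logb (hq : 1 < q) (hα : 0 < α) (j : ℤ) :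
    q ^ ((j : ℝ) + Real.logb q α) = α * q ^ j := by
  rw [Real.rpow_add (by linarith), Real.rpow_logb (by linarith) hq.ne' hα, Real.rpow_intCast,
    mul_comm]

theorem zpow_floor_add_logb_le (hq : 1 < q) (hα : 0 < α) (j : ℤ) :
    q ^ ⌊(j : ℝ) + Real.logb q α⌋ ≤ α * q ^ j := by
  rw [← rpow_intCast_add_logb hq hα, ← Real.rpow_intCast]
  exact Real.rpow_le_rpow_of_exponent_le hq.le (Int.floor_le _)

theorem lt_zpow_floor_add_logb_add_one (hq : 1 < q) (hα : 0 < α) (j : ℤ) :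
    α * q ^ j < q ^ (⌊(j : ℝ) + Real.logb q α⌋ + 1) := by
  rw [← rpow_intCast_add_logb hq hα, ← Real.rpow_intCast]
  exact Real.rpow_lt_rpow_of_exponent_lt hq (by push_cast; exact Int.lt_floor_add_one _)

theorem rpow_one_div_add_one_zpow {x : ℝ} (hx : 0 ≤ x) (n : ℕ) :
    (x ^ ((1 : ℝ) / (n + 1))) ^ ((n : ℤ) + 1) = x := by
  rw [show (n : ℤ) + 1 = ((n + 1 : ℕ) : ℤ) by push_cast; rfl, zpow_natCast, one_div,
    ← Nat.cast_succ, Real.rpow_inv_natCast_pow hx n.succ_ne_zero]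

end Rounding

-- `T` is the paper's `τ′` for the ratio `q`.
structure IsApproxTau {n : ℕ} (hn : 0 < n) {E : Type} [Fintype E] (src dst : E → Fin n)
    (w : E → ℝ) (q : ℝ) (T : Fin n → ℝ → EReal) : Prop where
  apply_zero : ∀ v : Fin n, T v 0 = ⊥
  source_of_le_one : ∀ a : ℝ, 0 < a → a ≤ 1 → T ⟨0, hn⟩ a = 0
  source_of_one_lt : ∀ a : ℝ, 1 < a → T ⟨0, hn⟩ a = ⊤
  zpow_eq : ∀ v : Fin n, v ≠ ⟨0, hn⟩ → ∀ j : ℤ,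
    T v (q ^ j) = sInf {x : EReal |
      ∃ α : E → ℝ, (∀ e, dst e = v → 0 ≤ α e) ∧
        (∑ e ∈ Finset.univ.filter (fun e => dst e = v), α e) = 1 ∧
        x = (Finset.univ.filter (fun e => dst e = v)).sup
          (fun e => T (src e)
            (if α e = 0 then 0 else q ^ ⌊(j : ℝ) + Real.logb q (α e)⌋) + (w e : EReal))}

namespace IsApproxTau

variable {n : ℕ} {hn : 0 < n} {E : Type} [Fintype E] {src dst : E → Fin n} {w : E → ℝ}
  {q : ℝ} {T : Fin n → ℝ → EReal}

theorem source_eq_tau (hT : IsApproxTau hn src dst w q T) (htopo : ∀ e, src e < dst e)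
    {a : ℝ} (ha : 0 < a) : T ⟨0, hn⟩ a = tau src dst w ⟨0, hn⟩ ⟨0, hn⟩ a := by
  rcases le_or_gt a 1 with ha1 | ha1
  · rw [hT.source_of_le_one a ha ha1, tau_self_of_le_one w htopo _ ha ha1]
  · rw [hT.source_of_one_lt a ha1, tau_self_of_one_lt w htopo _ ha1]

theorem le_tau (hT : IsApproxTau hn src dst w q T) (hq : 1 < q) (htopo : ∀ e, src e < dst e)
    (v : Fin n) (j : ℤ) : T v (q ^ j) ≤ tau src dst w ⟨0, hn⟩ v (q ^ j) := by
  induction v using WellFoundedLT.induction generalizing j with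
  | _ v ih =>
  rcases eq_or_ne v ⟨0, hn⟩ with rfl | hv
  · exact (hT.source_eq_tau htopo (zpow_pos (by linarith) j)).le
  rw [hT.zpow_eq v hv j, tau_eq_sInf_walkCount]
  refine le_sInf ?_
  rintro _ ⟨M, rfl, hM⟩
  set N := walkCount src dst w ⟨0, hn⟩ v M
  have hN : (0 : ℝ) < N := (zpow_pos (by linarith) j).trans_le hM
  -- `α e` is the share of the `N` paths whose last edge is `e`
  set α : E → ℝ := fun e => walkCount src dst w ⟨0, hn⟩ (src e) (M - w e) / N
  have hα : ∑ e ∈ Finset.univ.filter (fun e => dst e = v), α e = 1 := by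
    rw [← Finset.sum_div, div_eq_one_iff_eq hN.ne', show N = _ from walkCount_eq_sum w htopo hv M]
    push_cast
    rfl
  refine sInf_le_of_le ⟨α, fun e _ => by positivity, hα, rfl⟩ (Finset.sup_le fun e he => ?_)
  have hsrc : src e < v := (Finset.mem_filter.1 he).2 ▸ htopo e
  split_ifs with hαe
  · rw [hT.apply_zero, EReal.bot_add]
    exact bot_le
  have hαpos : 0 < α e := (by positivity : 0 ≤ α e).lt_of_ne' hαe
  have hcount : q ^ ⌊(j : ℝ) + Real.logb q (α e)⌋ ≤
      (walkCount src dst w ⟨0, hn⟩ (src e) (M - w e) : ℝ) :=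
    calc _ ≤ α e * q ^ j := zpow_floor_add_logb_le hq hαpos j
      _ ≤ α e * N := by gcongr
      _ = _ := div_mul_cancel₀ _ hN.ne'
  rw [EReal.add_coe_le_coe_iff]
  exact (ih (src e) hsrc _).trans ((tau_le_coe_iff w htopo _ _ _ _).2 hcount)

theorem tau_le (hT : IsApproxTau hn src dst w q T) (hq : 1 < q) (htopo : ∀ e, src e < dst e)
    (v : Fin n) (j : ℤ) : tau src dst w ⟨0, hn⟩ v (q ^ (j - (v : ℕ))) ≤ T v (q ^ j) := by
  have hq0 : 0 < q := by linarith
  induction v using WellFoundedLT.induction generalizing j with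
  | _ v ih =>
  rcases eq_or_ne v ⟨0, hn⟩ with rfl | hv
  · simpa using (hT.source_eq_tau htopo (zpow_pos hq0 j)).ge
  rw [hT.zpow_eq v hv j]
  refine le_sInf ?_
  rintro _ ⟨α, hα0, hα, rfl⟩
  refine EReal.le_of_forall_lt_iff_le.1 fun M hM => ?_
  rw [tau_le_coe_iff w htopo, walkCount_eq_sum w htopo hv]
  push_cast
  rw [← one_mul (q ^ _), ← hα, Finset.sum_mul]
  refine Finset.sum_le_sum fun e he => ?_
  have hterm := (Finset.le_sup (f := fun e => T (src e)
      (if α e = 0 then 0 else q ^ ⌊(j : ℝ) + Real.logb q (α e)⌋) + (w e : EReal)) he).trans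
    hM.le
  have hev := (Finset.mem_filter.1 he).2
  have hsrc : src e < v := hev ▸ htopo e
  rcases (hα0 e hev).eq_or_lt with hαe | hαpos
  · rw [← hαe, zero_mul]
    positivity
  rw [if_neg hαpos.ne', EReal.add_coe_le_coe_iff] at hterm
  set i := ⌊(j : ℝ) + Real.logb q (α e)⌋
  have hcount := (tau_le_coe_iff w htopo _ _ _ _).1 ((ih (src e) hsrc i).trans hterm)
  refine le_trans ?_ hcount
  -- rounding `α e * q ^ j` down to `q ^ i` loses less than a factor `q`, paid for by `src e < v`
  have hsrc' : ((src e : ℕ) : ℤ) + 1 ≤ (v : ℕ) := by have := Fin.lt_def.1 hsrc; omega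
  calc α e * q ^ (j - (v : ℕ)) = α e * q ^ j * q ^ (-((v : ℕ) : ℤ)) := by
        rw [sub_eq_add_neg, zpow_add₀ hq0.ne', mul_assoc]
    _ ≤ q ^ (i + 1) * q ^ (-((v : ℕ) : ℤ)) := by
        gcongr
        exact (lt_zpow_floor_add_logb_add_one hq hαpos j).le
    _ = q ^ (i + 1 - (v : ℕ)) := by rw [← zpow_add₀ hq0.ne', sub_eq_add_neg]
    _ ≤ q ^ (i - (src e : ℕ)) := zpow_le_zpow_right₀ hq.le (by omega)

end IsApproxTau

theorem stmt1
    {n : ℕ} (hn : 0 < n) {E : Type} [Fintype E]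
    (src dst : E → Fin n) (w : E → ℝ)
    (htopo : ∀ e, src e < dst e)
    (ε : ℝ) (hε : 0 < ε)
    (q : ℝ) (hqdef : q = (1 + ε) ^ ((1 : ℝ) / (n + 1)))
    (T : Fin n → ℝ → EReal)
    (hT0 : ∀ v : Fin n, T v 0 = ⊥)
    (hTs1 : ∀ a : ℝ, 0 < a → a ≤ 1 → T ⟨0, hn⟩ a = 0)
    (hTs2 : ∀ a : ℝ, 1 < a → T ⟨0, hn⟩ a = ⊤)
    (hTrec : ∀ v : Fin n, v ≠ ⟨0, hn⟩ → ∀ j : ℤ,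
      T v (q ^ j) = sInf {x : EReal |
        ∃ α : E → ℝ, (∀ e, dst e = v → 0 ≤ α e) ∧
          (∑ e ∈ Finset.univ.filter (fun e => dst e = v), α e) = 1 ∧
          x = (Finset.univ.filter (fun e => dst e = v)).sup
            (fun e => T (src e)
              (if α e = 0 then 0 else q ^ ⌊(j : ℝ) + Real.logb q (α e)⌋) + (w e : EReal))})
    (L : ℝ) (k : ℤ)
    (hk1 : T ⟨n - 1, by omega⟩ (q ^ k) ≤ (L : EReal))
    (hk2 : (L : EReal) < T ⟨n - 1, by omega⟩ (q ^ (k + 1)))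
    (a : ℕ)
    (ha1 : tau src dst w ⟨0, hn⟩ ⟨n - 1, by omega⟩ (a : ℝ) ≤ (L : EReal))
    (ha2 : (L : EReal) < tau src dst w ⟨0, hn⟩ ⟨n - 1, by omega⟩ ((a : ℝ) + 1)) :
    (1 + ε)⁻¹ ≤ (a : ℝ) / q ^ k ∧ (a : ℝ) / q ^ k ≤ 1 + ε := by
  have hT : IsApproxTau hn src dst w q T := ⟨hT0, hTs1, hTs2, hTrec⟩
  have hq : 1 < q := hqdef ▸ Real.one_lt_rpow (by linarith) (by positivity)
  have hq0 : 0 < q := by linarith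
  have hqn : q ^ ((n : ℤ) + 1) = 1 + ε := hqdef ▸ rpow_one_div_add_one_zpow (by linarith) n
  set v : Fin n := ⟨n - 1, by omega⟩
  have hv : ((v : ℕ) : ℤ) = n - 1 := by simp only [v]; omega
  have hcount : walkCount src dst w ⟨0, hn⟩ v L = a := walkCount_eq_of_tau w htopo ha1 ha2
  have hlower : q ^ (k - (n - 1)) ≤ (a : ℝ) := by
    rw [← hcount, ← tau_le_coe_iff w htopo, ← hv]
    exact (hT.tau_le hq htopo v k).trans hk1
  have hupper : (a : ℝ) < q ^ (k + 1) := by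
    rw [← hcount, ← not_le, ← tau_le_coe_iff w htopo]
    exact fun h => (hk2.trans_le ((hT.le_tau hq htopo v (k + 1)).trans h)).false
  have hqk : 0 < q ^ k := zpow_pos hq0 k
  constructor
  · rw [le_div_iff₀ hqk, ← hqn, ← zpow_neg, ← zpow_add₀ hq0.ne']
    exact (zpow_le_zpow_right₀ hq.le (by omega)).trans hlower
  · rw [div_le_iff₀ hqk, ← hqn, ← zpow_add₀ hq0.ne']
    exact hupper.le.trans (zpow_le_zpow_right₀ hq.le (by omega))
end

section
/- Let v be a vertex with v ≠ s whose incoming edges come from predecessors p_1,…,p_d with d ≥ 1 (with multiplicity for parallel edges) and edge weights l_1,…,l_d, and let a ≥ 1 be an integer. Then the minimum over all tuples (α_1,…,α_d) of nonnegative reals with α_1+⋯+α_d = 1 of max_{1≤s≤d} ( τ(p_s, α_s·a) + l_s ) equals the minimum over all tuples (a_1,…,a_d) of nonnegative integers with a_1+⋯+a_d = a of max_{1≤s≤d} ( τ(p_s, a_s) + l_s ). -/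
/-!
Scaling an integer composition `f` of `a` by `1 / a` gives a point of the simplex with the same
objective, so the real minimum is at most the integer one. Conversely, since path counts are
integers, `τ(p, x) = τ(p, ⌈x⌉)`; rounding every `α_s a` up therefore keeps the objective and gives
integers summing to at least `a`, which can be lowered to sum exactly `a` without increasing any
`τ`, as `τ` is monotone in its second argument.
-/

open scoped BigOperators

section Tau

variable {V E : Type} (src dst : E → V) (w : E → ℝ) (s v : V)

lemma tau_mono : Monotone (tau src dst w s v) := fun _ _ hab =>
  sInf_le_sInf fun _ ⟨L, hx, hL⟩ => ⟨L, hx, hab.trans hL⟩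

lemma tau_natCeil (a : ℝ) : tau src dst w s v ⌈a⌉₊ = tau src dst w s v a := by
  simp only [tau, Nat.cast_le, Nat.ceil_le]

end Tau

lemma exists_le_sum_eq_of_le_sum {ι : Type*} [DecidableEq ι] (D : Finset ι) (g : ι → ℕ)
    {n : ℕ} (hn : n ≤ ∑ i ∈ D, g i) :
    ∃ f : ι → ℕ, (∀ i ∈ D, f i ≤ g i) ∧ ∑ i ∈ D, f i = n := by
  induction n with
  | zero => exact ⟨0, fun _ _ => Nat.zero_le _, by simp⟩
  | succ n ih =>
    obtain ⟨f, hfg, rfl⟩ := ih (by omega)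
    obtain ⟨i, hi, hlt⟩ := Finset.exists_lt_of_sum_lt (s := D) (f := f) (g := g) (by omega)
    refine ⟨f + Pi.single i 1, fun j hj => ?_, ?_⟩
    · rcases eq_or_ne j i with rfl | hji
      · simpa using hlt
      · simpa [hji] using hfg j hj
    · simp only [Pi.add_apply, Finset.sum_add_distrib, Finset.sum_pi_single', if_pos hi]

theorem sInf_sup_simplex_eq_sInf_sup_composition {ι : Type*} (D : Finset ι)
    (T : ι → ℝ → EReal) (hT : ∀ i, Monotone (T i)) (hceil : ∀ i x, T i ⌈x⌉₊ = T i x)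
    {a : ℕ} (ha : 0 < a) :
    sInf {x : EReal | ∃ α : ι → ℝ, (∀ i ∈ D, 0 ≤ α i) ∧ ∑ i ∈ D, α i = 1 ∧
        x = D.sup fun i => T i (α i * a)} =
    sInf {x : EReal | ∃ f : ι → ℕ, ∑ i ∈ D, f i = a ∧ x = D.sup fun i => T i (f i)} := by
  classical
  have haR : (a : ℝ) ≠ 0 := by positivity
  apply le_antisymm
  · refine sInf_le_sInf ?_
    rintro x ⟨f, hf, rfl⟩
    refine ⟨fun i => f i / a, fun i _ => by positivity, ?_, ?_⟩
    · rw [← Finset.sum_div, ← Nat.cast_sum, hf, div_self haR]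
    · simp only [div_mul_cancel₀ _ haR]
  · refine le_sInf ?_
    rintro x ⟨α, -, hα, rfl⟩
    have hceil_sum : a ≤ ∑ i ∈ D, ⌈α i * a⌉₊ := by
      have : (a : ℝ) ≤ ∑ i ∈ D, (⌈α i * a⌉₊ : ℝ) :=
        calc (a : ℝ) = ∑ i ∈ D, α i * a := by rw [← Finset.sum_mul, hα, one_mul]
          _ ≤ _ := Finset.sum_le_sum fun i _ => Nat.le_ceil _
      exact_mod_cast this
    obtain ⟨f, hf_le, hf⟩ := exists_le_sum_eq_of_le_sum D _ hceil_sum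
    refine le_trans (sInf_le ⟨f, hf, rfl⟩) (Finset.sup_mono_fun fun i hi => ?_)
    exact (hT i (by exact_mod_cast hf_le i hi)).trans_eq (hceil i _)

theorem stmt9_general
    {V E : Type} [Fintype E] [DecidableEq V]
    (src dst : E → V) (w : E → ℝ)
    (s : V) (v : V)
    (a : ℕ) (ha : 1 ≤ a) :
    sInf {x : EReal |
      ∃ α : E → ℝ, (∀ e, dst e = v → 0 ≤ α e) ∧
        (∑ e ∈ Finset.univ.filter (fun e => dst e = v), α e) = 1 ∧
        x = (Finset.univ.filter (fun e => dst e = v)).sup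
          (fun e => tau src dst w s (src e) (α e * a) + (w e : EReal))} =
    sInf {x : EReal |
      ∃ f : E → ℕ,
        (∑ e ∈ Finset.univ.filter (fun e => dst e = v), f e) = a ∧
        x = (Finset.univ.filter (fun e => dst e = v)).sup
          (fun e => tau src dst w s (src e) (f e : ℝ) + (w e : EReal))} := by
  have h := sInf_sup_simplex_eq_sInf_sup_composition (Finset.univ.filter fun e => dst e = v)
    (fun e x => tau src dst w s (src e) x + (w e : EReal))
    (fun e _ _ hxy => add_le_add_left (tau_mono src dst w s (src e) hxy) _)
    (fun e x => by rw [tau_natCeil]) ha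
  simpa only [Finset.mem_filter, Finset.mem_univ, true_and] using h

theorem stmt9
    {V E : Type} [Fintype V] [Fintype E] [DecidableEq V]
    (src dst : E → V) (w : E → ℝ)
    (ord : V → ℕ) (hacyc : ∀ e, ord (src e) < ord (dst e))
    (s : V) (v : V) (hv : v ≠ s)
    (hd : (Finset.univ.filter (fun e => dst e = v)).Nonempty)
    (a : ℕ) (ha : 1 ≤ a) :
    sInf {x : EReal |
      ∃ α : E → ℝ, (∀ e, dst e = v → 0 ≤ α e) ∧
        (∑ e ∈ Finset.univ.filter (fun e => dst e = v), α e) = 1 ∧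
        x = (Finset.univ.filter (fun e => dst e = v)).sup
          (fun e => tau src dst w s (src e) (α e * a) + (w e : EReal))} =
    sInf {x : EReal |
      ∃ f : E → ℕ,
        (∑ e ∈ Finset.univ.filter (fun e => dst e = v), f e) = a ∧
        x = (Finset.univ.filter (fun e => dst e = v)).sup
          (fun e => tau src dst w s (src e) (f e : ℝ) + (w e : EReal))} :=
  stmt9_general src dst w s v a ha
end
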